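/- arXiv:1803.03634 — 2 statements merged into one kernel-verified Lean document; each statement's English description precedes it below -/
import Mathlib

section
/- Let s : ℝ → [0,1] be a smooth function with supp s ⊂ (-δ, ∞) and s(t)² + s(-t)² = 1 for all t. Define E(h)(t) = s(t)² h(t) + s(t) s(-t) h(-t). Then E, initially defined on continuous functions, extends to a bounded operator on L²(ℝ) that is an orthogonal projection (E² = E and E is self-adjoint). -/
open MeasureTheory
open scoped ENNReal

namespace AWW

/-- The AWW operator on functions. -/
noncomputable def Efun (s : ℝ → ℝ) (f : ℝ → ℝ) : ℝ → ℝ :=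
  fun t => s t ^ 2 * f t + s t * s (-t) * f (-t)

lemma negMP : MeasurePreserving (fun t : ℝ => -t) volume volume :=
  Measure.measurePreserving_neg _

lemma memE {s : ℝ → ℝ} (hb : ∀ t, |s t| ≤ 1) (hcs : Continuous s) {f : ℝ → ℝ}
    (hf : MemLp f 2 (volume : Measure ℝ)) : MemLp (Efun s f) 2 (volume : Measure ℝ) := by
  have hfneg : MemLp (fun t => f (-t)) 2 (volume : Measure ℝ) :=
    hf.comp_measurePreserving negMP
  have h1 : MemLp (fun t => s t ^ 2 * f t) 2 (volume : Measure ℝ) := by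
    refine MemLp.of_le hf ((hcs.pow 2).aestronglyMeasurable.mul hf.1) ?_
    filter_upwards with t
    rw [norm_mul, norm_pow, Real.norm_eq_abs]
    have h := hb t
    have h0 := abs_nonneg (s t)
    have h1 : |s t| ^ 2 ≤ 1 := by nlinarith
    calc |s t| ^ 2 * ‖f t‖ ≤ 1 * ‖f t‖ :=
          mul_le_mul_of_nonneg_right h1 (norm_nonneg _)
      _ = ‖f t‖ := one_mul _
  have h2 : MemLp (fun t => s t * s (-t) * f (-t)) 2 (volume : Measure ℝ) := by
    refine MemLp.of_le hfneg
      (((hcs.mul (hcs.comp continuous_neg)).aestronglyMeasurable).mul hfneg.1) ?_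
    filter_upwards with t
    rw [norm_mul, norm_mul, Real.norm_eq_abs, Real.norm_eq_abs]
    have ha := hb t
    have hb' := hb (-t)
    have h0 := abs_nonneg (s t)
    have h0' := abs_nonneg (s (-t))
    have h1 : |s t| * |s (-t)| ≤ 1 := by nlinarith
    calc |s t| * |s (-t)| * ‖f (-t)‖ ≤ 1 * ‖f (-t)‖ :=
          mul_le_mul_of_nonneg_right h1 (norm_nonneg _)
      _ = ‖f (-t)‖ := one_mul _
  exact h1.add h2

lemma eLpE {s : ℝ → ℝ} (hb : ∀ t, |s t| ≤ 1) (hcs : Continuous s) {f : ℝ → ℝ}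
    (hf : MemLp f 2 (volume : Measure ℝ)) :
    eLpNorm (Efun s f) 2 volume ≤ 2 * eLpNorm f 2 volume := by
  have hfneg : MemLp (fun t => f (-t)) 2 (volume : Measure ℝ) :=
    hf.comp_measurePreserving negMP
  have hm1 : AEStronglyMeasurable (fun t => s t ^ 2 * f t) (volume : Measure ℝ) :=
    (hcs.pow 2).aestronglyMeasurable.mul hf.1
  have hm2 : AEStronglyMeasurable (fun t => s t * s (-t) * f (-t)) (volume : Measure ℝ) :=
    ((hcs.mul (hcs.comp continuous_neg)).aestronglyMeasurable).mul hfneg.1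
  have key : eLpNorm (Efun s f) 2 volume ≤
      eLpNorm (fun t => s t ^ 2 * f t) 2 volume +
        eLpNorm (fun t => s t * s (-t) * f (-t)) 2 volume :=
    eLpNorm_add_le hm1 hm2 one_le_two
  have b1 : eLpNorm (fun t => s t ^ 2 * f t) 2 volume ≤ eLpNorm f 2 volume := by
    refine eLpNorm_mono_ae ?_
    filter_upwards with t
    rw [norm_mul, norm_pow, Real.norm_eq_abs]
    have h := hb t
    have h0 := abs_nonneg (s t)
    have h1 : |s t| ^ 2 ≤ 1 := by nlinarith
    calc |s t| ^ 2 * ‖f t‖ ≤ 1 * ‖f t‖ :=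
          mul_le_mul_of_nonneg_right h1 (norm_nonneg _)
      _ = ‖f t‖ := one_mul _
  have b2 : eLpNorm (fun t => s t * s (-t) * f (-t)) 2 volume ≤ eLpNorm f 2 volume := by
    have hcomp : eLpNorm (fun t => f (-t)) 2 volume = eLpNorm f 2 volume :=
      eLpNorm_comp_measurePreserving hf.1 negMP
    calc eLpNorm (fun t => s t * s (-t) * f (-t)) 2 volume
        ≤ eLpNorm (fun t => f (-t)) 2 volume := by
          refine eLpNorm_mono_ae ?_
          filter_upwards with t
          rw [norm_mul, norm_mul, Real.norm_eq_abs, Real.norm_eq_abs]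
          have ha := hb t
          have hb' := hb (-t)
          have h0 := abs_nonneg (s t)
          have h0' := abs_nonneg (s (-t))
          have h1 : |s t| * |s (-t)| ≤ 1 := by nlinarith
          calc |s t| * |s (-t)| * ‖f (-t)‖ ≤ 1 * ‖f (-t)‖ :=
                mul_le_mul_of_nonneg_right h1 (norm_nonneg _)
            _ = ‖f (-t)‖ := one_mul _
      _ = eLpNorm f 2 volume := hcomp
  calc eLpNorm (Efun s f) 2 volume
      ≤ eLpNorm f 2 volume + eLpNorm f 2 volume := key.trans (add_le_add b1 b2)
    _ = 2 * eLpNorm f 2 volume := (two_mul _).symm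

lemma Efun_congr {s : ℝ → ℝ} {f g : ℝ → ℝ} (h : f =ᵐ[volume] g) :
    Efun s f =ᵐ[volume] Efun s g := by
  have h2 : (fun t : ℝ => f (-t)) =ᵐ[volume] fun t => g (-t) :=
    ae_eq_comp (measurable_neg.aemeasurable) (negMP.map_eq.symm ▸ h)
  filter_upwards [h, h2] with t e1 e2
  simp only [Efun, e1, e2]

end AWW

/-- The Auscher–Weiss–Wickerhauser operator
`E h t = s(t)² h(t) + s(t) s(-t) h(-t)`, where `s : ℝ → [0,1]` is smooth, vanishes on
`(-∞, -δ]` and satisfies `s(t)² + s(-t)² = 1`, extends to a bounded operator on `L²(ℝ)`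
which is an orthogonal projection: `E ∘ E = E` and `E` is self-adjoint. -/
theorem stmt0 (δ : ℝ) (hδ : 0 < δ) (s : ℝ → ℝ) (hs : ContDiff ℝ (⊤ : ℕ∞) s)
    (hrange : ∀ t, s t ∈ Set.Icc (0:ℝ) 1) (hsupp : ∀ t ≤ -δ, s t = 0)
    (hsq : ∀ t, s t ^ 2 + s (-t) ^ 2 = 1) :
    ∃ E : Lp ℝ 2 (volume : Measure ℝ) →L[ℝ] Lp ℝ 2 (volume : Measure ℝ),
      (∀ (h : ℝ → ℝ) (hh : MemLp h 2 (volume : Measure ℝ)), Continuous h →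
        ⇑(E (hh.toLp h)) =ᵐ[volume] fun t => s t ^ 2 * h t + s t * s (-t) * h (-t)) ∧
      E ∘L E = E ∧
      ∀ f g : Lp ℝ 2 (volume : Measure ℝ),
        @inner ℝ _ _ (E f) g = @inner ℝ _ _ f (E g) := by
  have hb : ∀ t, |s t| ≤ 1 := fun t =>
    abs_le.2 ⟨by linarith [(hrange t).1], (hrange t).2⟩
  have hcs : Continuous s := hs.continuous
  -- the underlying linear map
  let L : Lp ℝ 2 (volume : Measure ℝ) →ₗ[ℝ] Lp ℝ 2 (volume : Measure ℝ) :=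
    { toFun := fun f => (AWW.memE hb hcs (Lp.memLp f)).toLp _
      map_add' := by
        intro f g
        apply Lp.ext
        have h1 := MemLp.coeFn_toLp (AWW.memE hb hcs (Lp.memLp (f + g)))
        have h2 := MemLp.coeFn_toLp (AWW.memE hb hcs (Lp.memLp f))
        have h3 := MemLp.coeFn_toLp (AWW.memE hb hcs (Lp.memLp g))
        have h4 := AWW.Efun_congr (s := s) (Lp.coeFn_add f g)
        have h5 := Lp.coeFn_add ((AWW.memE hb hcs (Lp.memLp f)).toLp _)
          ((AWW.memE hb hcs (Lp.memLp g)).toLp _)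
        filter_upwards [h1, h2, h3, h4, h5] with t e1 e2 e3 e4 e5
        simp only [Pi.add_apply] at *
        rw [e1, e4, e5, e2, e3]
        simp only [AWW.Efun, Pi.add_apply]
        ring
      map_smul' := by
        intro c f
        apply Lp.ext
        have h1 := MemLp.coeFn_toLp (AWW.memE hb hcs (Lp.memLp (c • f)))
        have h2 := MemLp.coeFn_toLp (AWW.memE hb hcs (Lp.memLp f))
        have h4 := AWW.Efun_congr (s := s) (Lp.coeFn_smul c f)
        have h5 := Lp.coeFn_smul c ((AWW.memE hb hcs (Lp.memLp f)).toLp _)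
        filter_upwards [h1, h2, h4, h5] with t e1 e2 e4 e5
        simp only [RingHom.id_apply]
        simp only [Pi.smul_apply, smul_eq_mul] at *
        rw [e1, e4, e5, e2]
        simp only [AWW.Efun, Pi.smul_apply, smul_eq_mul]
        ring }
  have hbound : ∀ f, ‖L f‖ ≤ 2 * ‖f‖ := by
    intro f
    have hle := AWW.eLpE hb hcs (Lp.memLp f)
    have : ‖L f‖ = (eLpNorm (AWW.Efun s ⇑f) 2 volume).toReal :=
      Lp.norm_toLp _ (AWW.memE hb hcs (Lp.memLp f))
    rw [this, Lp.norm_def]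
    calc (eLpNorm (AWW.Efun s ⇑f) 2 volume).toReal
        ≤ (2 * eLpNorm (⇑f) 2 volume).toReal :=
          ENNReal.toReal_mono
            (ENNReal.mul_ne_top (by norm_num) (Lp.eLpNorm_ne_top f)) hle
      _ = 2 * (eLpNorm (⇑f) 2 volume).toReal := by
          rw [ENNReal.toReal_mul]; norm_num
  refine ⟨L.mkContinuous 2 hbound, ?_, ?_, ?_⟩
  · -- action on continuous representatives
    intro h hh _
    have h1 : ⇑(L.mkContinuous 2 hbound (hh.toLp h)) =ᵐ[volume]
        AWW.Efun s ⇑(hh.toLp h) :=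
      MemLp.coeFn_toLp (AWW.memE hb hcs (Lp.memLp (hh.toLp h)))
    exact h1.trans (AWW.Efun_congr (MemLp.coeFn_toLp hh))
  · -- projection
    set E := L.mkContinuous 2 hbound with hE
    have hEcoe : ∀ f : Lp ℝ 2 (volume : Measure ℝ),
        ⇑(E f) =ᵐ[volume] AWW.Efun s ⇑f := fun f =>
      MemLp.coeFn_toLp (AWW.memE hb hcs (Lp.memLp f))
    ext f
    have c1 := hEcoe (E f)
    have c2 := AWW.Efun_congr (s := s) (hEcoe f)
    have c3 : AWW.Efun s (AWW.Efun s ⇑f) =ᵐ[volume] AWW.Efun s ⇑f := by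
      filter_upwards with t
      simp only [AWW.Efun, neg_neg]
      linear_combination (s t ^ 2 * f t + s t * s (-t) * f (-t)) * hsq t
    calc ⇑(E (E f)) =ᵐ[volume] AWW.Efun s ⇑(E f) := c1
      _ =ᵐ[volume] AWW.Efun s (AWW.Efun s ⇑f) := c2
      _ =ᵐ[volume] AWW.Efun s ⇑f := c3
      _ =ᵐ[volume] ⇑(E f) := (hEcoe f).symm
  · -- self-adjoint
    set E := L.mkContinuous 2 hbound with hE
    have hEcoe : ∀ f : Lp ℝ 2 (volume : Measure ℝ),
        ⇑(E f) =ᵐ[volume] AWW.Efun s ⇑f := fun f =>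
      MemLp.coeFn_toLp (AWW.memE hb hcs (Lp.memLp f))
    intro f g
    have hfneg : MemLp (fun t => f (-t)) 2 (volume : Measure ℝ) :=
      (Lp.memLp f).comp_measurePreserving AWW.negMP
    have hgneg : MemLp (fun t => g (-t)) 2 (volume : Measure ℝ) :=
      (Lp.memLp g).comp_measurePreserving AWW.negMP
    -- integrability facts
    have hfg : Integrable (fun t => f t * g t) volume := by
      have := L2.integrable_inner (𝕜 := ℝ) f g
      simpa [RCLike.inner_apply, starRingEnd_apply, mul_comm] using this
    have hfng : Integrable (fun t => f (-t) * g t) volume := by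
      have h0 := L2.integrable_inner (𝕜 := ℝ) (hfneg.toLp _) g
      simp only [RCLike.inner_apply, starRingEnd_apply, star_trivial] at h0
      refine h0.congr ?_
      filter_upwards [hfneg.coeFn_toLp] with t ht
      rw [ht, mul_comm]
    have hfgn : Integrable (fun t => f t * g (-t)) volume := by
      have h0 := L2.integrable_inner (𝕜 := ℝ) f (hgneg.toLp _)
      simp only [RCLike.inner_apply, starRingEnd_apply, star_trivial] at h0
      refine h0.congr ?_
      filter_upwards [hgneg.coeFn_toLp] with t ht
      rw [ht, mul_comm]
    have hbm : Continuous (fun t : ℝ => s t * s (-t)) :=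
      hcs.mul (hcs.comp continuous_neg)
    have hbmb : ∃ C : ℝ, ∀ t : ℝ, ‖s t * s (-t)‖ ≤ C := by
      refine ⟨1, fun t => ?_⟩
      rw [norm_mul, Real.norm_eq_abs, Real.norm_eq_abs]
      have := hb t; have := hb (-t)
      have := abs_nonneg (s t); have := abs_nonneg (s (-t))
      nlinarith
    have hsm : Continuous (fun t : ℝ => s t ^ 2) := hcs.pow 2
    have hsmb : ∃ C : ℝ, ∀ t : ℝ, ‖s t ^ 2‖ ≤ C := by
      refine ⟨1, fun t => ?_⟩
      rw [norm_pow, Real.norm_eq_abs]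
      have := hb t; have := abs_nonneg (s t)
      nlinarith
    have I1 : Integrable (fun t => s t ^ 2 * (f t * g t)) volume :=
      hfg.bdd_mul hsm.aestronglyMeasurable (Filter.Eventually.of_forall hsmb.choose_spec)
    have I2 : Integrable (fun t => (s t * s (-t)) * (f (-t) * g t)) volume :=
      hfng.bdd_mul hbm.aestronglyMeasurable (Filter.Eventually.of_forall hbmb.choose_spec)
    have I3 : Integrable (fun t => (s t * s (-t)) * (f t * g (-t))) volume :=
      hfgn.bdd_mul hbm.aestronglyMeasurable (Filter.Eventually.of_forall hbmb.choose_spec)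
    -- substitution t ↦ -t
    have key : (∫ t, (s t * s (-t)) * (f (-t) * g t)) =
        ∫ t, (s t * s (-t)) * (f t * g (-t)) := by
      have hsub := AWW.negMP.integral_comp (Homeomorph.neg ℝ).measurableEmbedding
        (fun u => (s u * s (-u)) * (f u * g (-u)))
      simp only [neg_neg] at hsub
      rw [← hsub]
      refine integral_congr_ae (Filter.Eventually.of_forall fun t => ?_)
      ring
    have e1 : @inner ℝ _ _ (E f) g =
        ∫ t, s t ^ 2 * (f t * g t) + (s t * s (-t)) * (f (-t) * g t) := by
      rw [L2.inner_def]
      refine integral_congr_ae ?_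
      filter_upwards [hEcoe f] with t ht
      simp only [RCLike.inner_apply, starRingEnd_apply, star_trivial, ht, AWW.Efun]
      ring
    have e2 : @inner ℝ _ _ f (E g) =
        ∫ t, s t ^ 2 * (f t * g t) + (s t * s (-t)) * (f t * g (-t)) := by
      rw [L2.inner_def]
      refine integral_congr_ae ?_
      filter_upwards [hEcoe g] with t ht
      simp only [RCLike.inner_apply, starRingEnd_apply, star_trivial, ht, AWW.Efun]
      ring
    rw [e1, e2, integral_add I1 I2, integral_add I1 I3, key]
end

section
/- Let ϑ₁ < ϑ₂ with ϑ₁ + δ < ϑ₂ - δ, and let E_{ϑ₁}, E_{ϑ₂} be AWW operators at cutoffs ϑ₁, ϑ₂ with the same window δ. Then E_{ϑ₂} E_{ϑ₁} = E_{ϑ₁} E_{ϑ₂} = E_{ϑ₂}, and consequently Q = E_{ϑ₁} - E_{ϑ₂} is a projection (Q² = Q) on L²(ℝ). -/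
/-- The AWW operator of positive polarity at cutoff `ϑ`. -/
noncomputable def aww (s : ℝ → ℝ) (ϑ : ℝ) (h : ℝ → ℝ) : ℝ → ℝ :=
  fun t => s (t - ϑ) ^ 2 * h t + s (t - ϑ) * s (ϑ - t) * h (2 * ϑ - t)

/-- The latitudinal difference operator `Q = E_{ϑ₁} - E_{ϑ₂}`. -/
noncomputable def awwQ (s : ℝ → ℝ) (ϑ₁ ϑ₂ : ℝ) (h : ℝ → ℝ) : ℝ → ℝ :=
  fun t => aww s ϑ₁ h t - aww s ϑ₂ h t

lemma s_one {δ : ℝ} (s : ℝ → ℝ) (hrange : ∀ t, s t ∈ Set.Icc (0:ℝ) 1)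
    (hsupp : ∀ t ≤ -δ, s t = 0) (hsq : ∀ t, s t ^ 2 + s (-t) ^ 2 = 1)
    {t : ℝ} (ht : δ ≤ t) : s t = 1 := by
  have h0 : s (-t) = 0 := hsupp _ (by linarith)
  have h1 := hsq t
  rw [h0] at h1
  have h2 := (hrange t).1
  nlinarith

lemma aww_idem {δ : ℝ} (hδ : 0 < δ) (s : ℝ → ℝ)
    (hsq : ∀ t, s t ^ 2 + s (-t) ^ 2 = 1) (ϑ : ℝ) (h : ℝ → ℝ) :
    aww s ϑ (aww s ϑ h) = aww s ϑ h := by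
  funext t
  have key := hsq (t - ϑ)
  rw [neg_sub] at key
  simp only [aww]
  have e1 : 2 * ϑ - t - ϑ = ϑ - t := by ring
  have e2 : ϑ - (2 * ϑ - t) = t - ϑ := by ring
  have e3 : 2 * ϑ - (2 * ϑ - t) = t := by ring
  rw [e1, e2, e3]
  linear_combination (s (t - ϑ) ^ 2 * h t + s (t - ϑ) * s (ϑ - t) * h (2 * ϑ - t)) * key

lemma aww_sub (s : ℝ → ℝ) (ϑ : ℝ) (f g : ℝ → ℝ) (t : ℝ) :
    aww s ϑ (fun u => f u - g u) t = aww s ϑ f t - aww s ϑ g t := by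
  simp only [aww]; ring

/-- If `ϑ₁ + δ < ϑ₂ - δ` then `E_{ϑ₂} E_{ϑ₁} = E_{ϑ₁} E_{ϑ₂} = E_{ϑ₂}`, and
consequently `Q = E_{ϑ₁} - E_{ϑ₂}` is a projection: `Q² = Q`. -/
theorem stmt5 (δ : ℝ) (hδ : 0 < δ) (s : ℝ → ℝ) (hs : ContDiff ℝ (⊤ : ℕ∞) s)
    (hrange : ∀ t, s t ∈ Set.Icc (0:ℝ) 1) (hsupp : ∀ t ≤ -δ, s t = 0)
    (hsq : ∀ t, s t ^ 2 + s (-t) ^ 2 = 1)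
    (ϑ₁ ϑ₂ : ℝ) (hlt : ϑ₁ < ϑ₂) (hsep : ϑ₁ + δ < ϑ₂ - δ) :
    (∀ h : ℝ → ℝ, aww s ϑ₂ (aww s ϑ₁ h) = aww s ϑ₂ h) ∧
    (∀ h : ℝ → ℝ, aww s ϑ₁ (aww s ϑ₂ h) = aww s ϑ₂ h) ∧
    (∀ h : ℝ → ℝ, awwQ s ϑ₁ ϑ₂ (awwQ s ϑ₁ ϑ₂ h) = awwQ s ϑ₁ ϑ₂ h) := by
  have hone : ∀ {t : ℝ}, δ ≤ t → s t = 1 := fun ht => s_one s hrange hsupp hsq ht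
  have h21 : ∀ h : ℝ → ℝ, aww s ϑ₂ (aww s ϑ₁ h) = aww s ϑ₂ h := by
    intro h
    funext t
    simp only [aww]
    by_cases h1 : t ≤ ϑ₂ - δ
    · rw [hsupp (t - ϑ₂) (by linarith)]; ring
    · push_neg at h1
      rw [hone (show δ ≤ t - ϑ₁ by linarith), hsupp (ϑ₁ - t) (by linarith)]
      by_cases h2 : ϑ₂ + δ ≤ t
      · rw [hsupp (ϑ₂ - t) (by linarith)]; ring
      · push_neg at h2
        rw [hone (show δ ≤ 2 * ϑ₂ - t - ϑ₁ by linarith),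
          hsupp (ϑ₁ - (2 * ϑ₂ - t)) (by linarith)]
        ring
  have h12 : ∀ h : ℝ → ℝ, aww s ϑ₁ (aww s ϑ₂ h) = aww s ϑ₂ h := by
    intro h
    funext t
    simp only [aww]
    by_cases h1 : t ≤ ϑ₁ - δ
    · rw [hsupp (t - ϑ₁) (by linarith), hsupp (t - ϑ₂) (by linarith)]; ring
    · push_neg at h1
      rw [hsupp (2 * ϑ₁ - t - ϑ₂) (by linarith)]
      by_cases h2 : t ≤ ϑ₂ - δ
      · rw [hsupp (t - ϑ₂) (by linarith)]; ring
      · push_neg at h2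
        rw [hone (show δ ≤ t - ϑ₁ by linarith)]; ring
  refine ⟨h21, h12, ?_⟩
  intro h
  funext t
  simp only [awwQ]
  rw [show awwQ s ϑ₁ ϑ₂ h = fun u => aww s ϑ₁ h u - aww s ϑ₂ h u from rfl,
    aww_sub, aww_sub,
    congrFun (aww_idem hδ s hsq ϑ₁ h) t,
    congrFun (h12 h) t, congrFun (h21 h) t,
    congrFun (aww_idem hδ s hsq ϑ₂ h) t]
  ring
end
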